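/- For integers $n \ge k \ge 1$: $\sum_{i=k}^{n} \binom{n}{i}\binom{i-1}{k-1} = \binom{n}{k}2^{n-k} - \beta$ where $\beta = \binom{n}{k}2^{n-k} - \sum_{i=k}^n\binom{n}{i}\binom{i-1}{k-1}$ satisfies $1 + (-1)^k \beta = \sum_{\ell=0}^{k}(-1)^\ell \binom{n}{\ell}2^{n-\ell}$. Equivalently, prove the identity $\sum_{\ell=0}^{k}(-1)^\ell \binom{n}{\ell}2^{n-\ell} = 1 + (-1)^k\left(\binom{n}{k}2^{n-k} - \sum_{i=k}^n \binom{n}{i}\binom{i-1}{k-1}\right)$ for all $1 \le k \le n$. -/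

import Mathlib

/-!
Write `f ℓ = C(n,ℓ) 2^(n-ℓ)` and `T m = ∑ᵢ C(n,i+1) C(i,m)` for the size of an `(m+1)`-spanning
tree. Counting pairs (`ℓ`-face, face containing it) gives `∑ᵢ C(n,i) C(i,ℓ) = f ℓ`, and Pascal's
rule `C(i+1,m+1) = C(i,m) + C(i,m+1)` splits this into `f (m+1) = T m + T (m+1)`, while
`f 0 = 1 + T 0`. The alternating sum of the `f ℓ` therefore telescopes to `1 + (-1)^m T m`, and
`T m = f (m+1) - T (m+1)` gives the claim for `k = m + 1`.
-/

open Finset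

theorem Nat.sum_range_choose_mul_choose (n k : ℕ) :
    ∑ i ∈ range (n + 1), n.choose i * i.choose k = n.choose k * 2 ^ (n - k) := by
  rcases lt_or_ge n k with hnk | hkn
  · rw [Nat.choose_eq_zero_of_lt hnk, zero_mul]
    exact sum_eq_zero fun i hi => by
      rw [Nat.choose_eq_zero_of_lt (n := i) (by grind), mul_zero]
  obtain ⟨d, rfl⟩ := Nat.exists_eq_add_of_le hkn
  have below_k : ∑ i ∈ range k, (k + d).choose i * i.choose k = 0 :=
    sum_eq_zero fun i hi => by rw [Nat.choose_eq_zero_of_lt (mem_range.mp hi), mul_zero]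
  rw [show k + d + 1 = k + (d + 1) by omega, sum_range_add, below_k, zero_add,
    Nat.add_sub_cancel_left, ← Nat.sum_range_choose d, mul_sum]
  refine sum_congr rfl fun j _ => ?_
  rw [Nat.choose_mul (Nat.le_add_right k j), Nat.add_sub_cancel_left, Nat.add_sub_cancel_left]

/-- The number `∑_{i=k}^n C(n,i) C(i-1,k-1)` of facets of a `k`-spanning tree of the `n`-cube,
for `k = m + 1` and reindexed by `i ↦ i + 1` so that no truncated subtraction occurs. -/
def spanningTreeFacets (n m : ℕ) : ℕ :=
  ∑ i ∈ range n, n.choose (i + 1) * i.choose m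

theorem sum_Icc_choose_mul_choose_pred_eq_spanningTreeFacets (n m : ℕ) :
    ∑ i ∈ Icc (m + 1) n, n.choose i * (i - 1).choose m = spanningTreeFacets n m := by
  have below_m : ∀ i ∈ range n, i ∉ Ico m n → n.choose (i + 1) * i.choose m = 0 :=
    fun i hi hi' => by
      rw [Nat.choose_eq_zero_of_lt (n := i) (by grind), mul_zero]
  rw [spanningTreeFacets, ← sum_subset (fun i hi => by grind) below_m,
    ← Finset.Ico_add_one_right_eq_Icc]
  simpa using (sum_Ico_add' (fun i => n.choose i * (i - 1).choose m) m n 1).symm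

theorem spanningTreeFacets_zero_add_one (n : ℕ) : spanningTreeFacets n 0 + 1 = 2 ^ n := by
  simpa [spanningTreeFacets, sum_range_succ'] using Nat.sum_range_choose_mul_choose n 0

theorem spanningTreeFacets_add_spanningTreeFacets_succ (n m : ℕ) :
    spanningTreeFacets n m + spanningTreeFacets n (m + 1) =
      n.choose (m + 1) * 2 ^ (n - (m + 1)) := by
  rw [← Nat.sum_range_choose_mul_choose, sum_range_succ', spanningTreeFacets, spanningTreeFacets,
    ← sum_add_distrib]
  simp only [Nat.choose_succ_succ', Nat.choose_zero_succ, mul_zero, add_zero, mul_add]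

theorem sum_range_neg_one_pow_mul_choose_mul_two_pow (n m : ℕ) :
    ∑ ℓ ∈ range (m + 1), (-1 : ℤ) ^ ℓ * (n.choose ℓ : ℤ) * 2 ^ (n - ℓ) =
      1 + (-1) ^ m * (spanningTreeFacets n m : ℤ) := by
  induction m with
  | zero =>
    have := spanningTreeFacets_zero_add_one n
    zify at this
    simp only [zero_add, sum_range_one, pow_zero, Nat.choose_zero_right, Nat.sub_zero]
    linear_combination -this
  | succ m ih =>
    have := spanningTreeFacets_add_spanningTreeFacets_succ n m
    zify at this
    rw [sum_range_succ, ih]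
    linear_combination (-1 : ℤ) ^ m * this

theorem stmt14_general (n k : ℕ) (hk : 1 ≤ k) :
    (∑ ℓ ∈ Finset.range (k + 1), (-1 : ℤ) ^ ℓ * (n.choose ℓ : ℤ) * 2 ^ (n - ℓ)) =
      1 + (-1 : ℤ) ^ k *
        ((n.choose k : ℤ) * 2 ^ (n - k) -
          ∑ i ∈ Finset.Icc k n, (n.choose i : ℤ) * ((i - 1).choose (k - 1) : ℤ)) := by
  obtain ⟨m, rfl⟩ := Nat.exists_eq_add_of_le' hk
  have tree := sum_Icc_choose_mul_choose_pred_eq_spanningTreeFacets n m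
  have pascal := spanningTreeFacets_add_spanningTreeFacets_succ n m
  rw [sum_range_neg_one_pow_mul_choose_mul_two_pow, Nat.add_sub_cancel]
  zify at tree pascal
  rw [tree]
  linear_combination (-1 : ℤ) ^ (m + 1) * pascal

/-- For `1 ≤ k ≤ n`, the Euler characteristic of the `k`-skeleton of the `n`-cube,
computed from the face counts `f_ℓ = C(n,ℓ) 2^(n-ℓ)`, equals `1 + (-1)^k β`, where
`β = C(n,k) 2^(n-k) - ∑_{i=k}^n C(n,i) C(i-1,k-1)` is the number of `k`-spheres in
the wedge decomposition of the shellable `k`-skeleton (the face count minus the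
size of a `k`-spanning tree). -/
theorem stmt14 (n k : ℕ) (hk : 1 ≤ k) (hkn : k ≤ n) :
    (∑ ℓ ∈ Finset.range (k + 1), (-1 : ℤ) ^ ℓ * (n.choose ℓ : ℤ) * 2 ^ (n - ℓ)) =
      1 + (-1 : ℤ) ^ k *
        ((n.choose k : ℤ) * 2 ^ (n - k) -
          ∑ i ∈ Finset.Icc k n, (n.choose i : ℤ) * ((i - 1).choose (k - 1) : ℤ)) :=
  stmt14_general n k hk
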